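/- arXiv:math/0612020 — 5 statements merged into one kernel-verified Lean document; each statement's English description precedes it below -/
import Mathlib

section
/- Suppose a C² curve satisfies ṫ_s = b e^{-√2 ω x_s} - a, ẏ_s = 2a e^{-√2 ω x_s} - b e^{-2√2 ω x_s}, ż_s = c, and the unit pseudo-norm relation 1 + ṫ_s² + ẋ_s² + ż_s² = (1/2)(e^{√2 ω x_s}ẏ_s + 2ṫ_s)². Then ẋ_s² + (1/2)(2a - b e^{-√2 ω x_s})² = a² - c² - 1 for all s. -/
open Real

/-- The unit pseudo-norm relation, rewritten using the first integrals, is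
`ẋ² + (1/2)(2a - b e^{-√2 ω x})² = a² - c² - 1`. -/
theorem godel_pseudonorm_reduction (ω a b c : ℝ) (hω : 0 < ω)
    (t x y z : ℝ → ℝ)
    (ht : ∀ s, deriv t s = b * exp (-(Real.sqrt 2 * ω * x s)) - a)
    (hy : ∀ s, deriv y s = 2 * a * exp (-(Real.sqrt 2 * ω * x s))
      - b * exp (-(2 * Real.sqrt 2 * ω * x s)))
    (hz : ∀ s, deriv z s = c)
    (h0 : ∀ s, 1 + (deriv t s) ^ 2 + (deriv x s) ^ 2 + (deriv z s) ^ 2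
      = (1/2) * (exp (Real.sqrt 2 * ω * x s) * deriv y s + 2 * deriv t s) ^ 2) :
    ∀ s, (deriv x s) ^ 2
      + (1/2) * (2 * a - b * exp (-(Real.sqrt 2 * ω * x s))) ^ 2
      = a ^ 2 - c ^ 2 - 1 := by
  intro s
  have h := h0 s
  rw [ht, hy, hz] at h
  have h1 : exp (Real.sqrt 2 * ω * x s) * exp (-(2 * Real.sqrt 2 * ω * x s))
      = exp (-(Real.sqrt 2 * ω * x s)) := by
    rw [← Real.exp_add]; ring_nf
  have h2 : exp (Real.sqrt 2 * ω * x s) * exp (-(Real.sqrt 2 * ω * x s)) = 1 := by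
    rw [← Real.exp_add]; ring_nf; exact Real.exp_zero
  set E := exp (-(Real.sqrt 2 * ω * x s)) with hEdef
  set F := exp (Real.sqrt 2 * ω * x s) with hFdef
  have key : F * (2 * a * E - b * exp (-(2 * Real.sqrt 2 * ω * x s))) = 2 * a - b * E := by
    linear_combination 2 * a * h2 - b * h1
  rw [key] at h
  nlinarith [h]
end

section
/- If a timelike geodesic of Gödel's universe satisfies ẋ_s² + (1/2)(2a - b e^{-√2 ω x_s})² = a² - c² - 1 for all s with some s having e^{-√2 ω x_s} > 0, then a² ≥ 1 + c² and ab > 0 unless ẋ ≡ 0 and 2a = b e^{-√2 ω x}. -/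
open Real

/-- Along a timelike geodesic of Gödel's universe satisfying
`ẋ² + (1/2)(2a − b e^{−√2 ω x})² = a² − c² − 1`, one has `a² ≥ 1 + c²`;
and unless `ẋ ≡ 0` and `2a = b e^{−√2 ω x}` identically, also `ab > 0`. -/
theorem godel_geodesic_parameter_constraints (ω a b c : ℝ) (hω : 0 < ω)
    (x : ℝ → ℝ)
    (h : ∀ s, (deriv x s) ^ 2
      + (1/2) * (2 * a - b * exp (-(Real.sqrt 2 * ω * x s))) ^ 2
      = a ^ 2 - c ^ 2 - 1) :
    a ^ 2 ≥ 1 + c ^ 2 ∧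
    (¬ (∀ s, deriv x s = 0 ∧ 2 * a = b * exp (-(Real.sqrt 2 * ω * x s))) →
      a * b > 0) := by
  have h0 := h 0
  set E := exp (-(Real.sqrt 2 * ω * x 0)) with hEdef
  have hE : 0 < E := exp_pos _
  constructor
  · nlinarith [sq_nonneg (deriv x 0), sq_nonneg (2 * a - b * E)]
  · intro _
    nlinarith [sq_nonneg (deriv x 0), sq_nonneg (b * E), sq_nonneg a, sq_nonneg c,
      mul_pos hE hE]
end

section
/- For k ∈ [0,1), a > 0, ω > 0, the function φ_s defined by tan(ω φ_s/2) = √(1-k²) tan(a√(1-k²) ω (s-s₀)) + k (on an interval where the tangents are defined) satisfies the ODE dφ_s/ds = 2a(1 - k sin(ω φ_s)). -/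
/-!
Inverting the implicit equation on the branch `ω φ / 2 ∈ (-π/2, π/2)` gives the closed form
`ω φ = 2 arctan (β tan (c (s - s₀)) + k)` with `β = √(1 - k²)` and `c = a β ω`. Writing
`T = β tan (c (s - s₀)) + k`, one has `T' = c β (1 + tan²) = (c / β) (1 + T² - 2 k T)` because
`β² = 1 - k²`, and the half-angle formula `sin (2 arctan T) = 2 T / (1 + T²)` turns
`(2 arctan T)' = 2 T' / (1 + T²)` into `(2 c / β) (1 - k sin (2 arctan T))`.
-/

open Real

theorem Real.hasDerivAt_tan_eq_one_add_tan_sq {x : ℝ} (h : cos x ≠ 0) :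
    HasDerivAt tan (1 + tan x ^ 2) x := by
  have := hasDerivAt_tan h
  rwa [one_div, ← inv_one_add_tan_sq h, inv_inv] at this

theorem Real.sin_two_mul_arctan (x : ℝ) : sin (2 * arctan x) = 2 * x / (1 + x ^ 2) := by
  rw [sin_eq_two_mul_tan_half_div_one_add_tan_half_sq, mul_div_cancel_left₀ _ two_ne_zero,
    tan_arctan]

theorem hasDerivAt_two_mul_arctan_shifted_tan {β k c s₀ s : ℝ} (hβ : β ^ 2 = 1 - k ^ 2)
    (hβ0 : β ≠ 0) (hcos : cos (c * (s - s₀)) ≠ 0) :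
    HasDerivAt (fun x => 2 * arctan (β * tan (c * (x - s₀)) + k))
      (2 * c / β * (1 - k * sin (2 * arctan (β * tan (c * (s - s₀)) + k)))) s := by
  set t := tan (c * (s - s₀))
  set T := β * t + k
  have hlin : HasDerivAt (fun x => c * (x - s₀)) c s := by
    simpa using ((hasDerivAt_id s).sub_const s₀).const_mul c
  have hT : HasDerivAt (fun x => β * tan (c * (x - s₀)) + k) (β * ((1 + t ^ 2) * c)) s :=
    (((hasDerivAt_tan_eq_one_add_tan_sq hcos).comp (h₂ := tan) s hlin).const_mul β).add_const k
  refine (((hasDerivAt_arctan T).comp s hT).const_mul 2).congr_deriv ?_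
  have hriccati : β ^ 2 * (1 + t ^ 2) = 1 + T ^ 2 - 2 * k * T := by
    simp only [T]; linear_combination hβ
  have hT2 : 1 + T ^ 2 ≠ 0 := by positivity
  rw [sin_two_mul_arctan]
  field_simp
  linear_combination c * hriccati

theorem godel_angular_ode_general (k a ω s₀ : ℝ) (hk0 : 0 ≤ k) (hk1 : k < 1)
    (hω : 0 < ω)
    (I : Set ℝ) (hI : IsOpen I)
    (φ : ℝ → ℝ)
    (hrange : ∀ s ∈ I,
      a * Real.sqrt (1 - k ^ 2) * ω * (s - s₀) ∈ Set.Ioo (-(π/2)) (π/2) ∧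
      ω * φ s / 2 ∈ Set.Ioo (-(π/2)) (π/2))
    (himp : ∀ s ∈ I,
      Real.tan (ω * φ s / 2)
        = Real.sqrt (1 - k ^ 2) * Real.tan (a * Real.sqrt (1 - k ^ 2) * ω * (s - s₀)) + k) :
    ∀ s ∈ I, HasDerivAt φ (2 * a * (1 - k * Real.sin (ω * φ s))) s := by
  intro s hs
  have hk : 0 < 1 - k ^ 2 := by nlinarith
  generalize hβ : √(1 - k ^ 2) = β at hrange himp
  have hβ0 : β ≠ 0 := hβ ▸ (sqrt_pos.mpr hk).ne'
  have hψ : ∀ x ∈ I, ω * φ x = 2 * arctan (β * tan (a * β * ω * (x - s₀)) + k) := fun x hx => by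
    rw [← himp x hx, arctan_tan (hrange x hx).2.1 (hrange x hx).2.2]; ring
  have hφψ : φ =ᶠ[nhds s] fun x => 2 * arctan (β * tan (a * β * ω * (x - s₀)) + k) / ω :=
    Filter.eventually_of_mem (hI.mem_nhds hs) fun x hx =>
      eq_div_of_mul_eq hω.ne' ((mul_comm _ _).trans (hψ x hx))
  have hderiv := (hasDerivAt_two_mul_arctan_shifted_tan (hβ ▸ sq_sqrt hk.le) hβ0
    (cos_pos_of_mem_Ioo (hrange s hs).1).ne').div_const ω
  refine (hderiv.congr_of_eventuallyEq hφψ).congr_deriv ?_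
  rw [hψ s hs]
  field_simp

/-- The angular component `φ_s`, defined implicitly by
`tan(ω φ_s/2) = √(1−k²) tan(a√(1−k²) ω (s−s₀)) + k`, solves the ODE
`φ̇_s = 2a(1 − k sin(ω φ_s))`. -/
theorem godel_angular_ode (k a ω s₀ : ℝ) (hk0 : 0 ≤ k) (hk1 : k < 1)
    (ha : 0 < a) (hω : 0 < ω)
    (I : Set ℝ) (hI : IsOpen I) (hs₀ : s₀ ∈ I)
    (φ : ℝ → ℝ) (hφcont : ContinuousOn φ I)
    (hrange : ∀ s ∈ I,
      a * Real.sqrt (1 - k ^ 2) * ω * (s - s₀) ∈ Set.Ioo (-(π/2)) (π/2) ∧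
      ω * φ s / 2 ∈ Set.Ioo (-(π/2)) (π/2))
    (himp : ∀ s ∈ I,
      Real.tan (ω * φ s / 2)
        = Real.sqrt (1 - k ^ 2) * Real.tan (a * Real.sqrt (1 - k ^ 2) * ω * (s - s₀)) + k) :
    ∀ s ∈ I, HasDerivAt φ (2 * a * (1 - k * Real.sin (ω * φ s))) s :=
  godel_angular_ode_general k a ω s₀ hk0 hk1 hω I hI φ hrange himp
end

section
/- Einstein's equations R_{ij} - (1/2)R g_{ij} + Λ g_{ij} = T_{ij} hold for Gödel's metric with Λ = ω², T_{ij} = u_i u_j where u = (√2 ω, 0, √2 ω e^{√2 ω x}, 0): i.e., for all i,j in {t,x,y,z}, R_{ij} - (1/2)(2ω²) g_{ij} + ω² g_{ij} = u_i u_j. -/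
open Real

/-- Einstein's equations for Gödel's metric, with cosmological constant `Λ = ω²` and
energy tensor `T_{ij} = u_i u_j`, `u = (√2 ω, 0, √2 ω e^{√2 ω x}, 0)`:
`R_{ij} − (1/2)R g_{ij} + Λ g_{ij} = u_i u_j`. -/
theorem godel_einstein_equations (ω x : ℝ) (hω : 0 < ω) :
    let g : Matrix (Fin 4) (Fin 4) ℝ :=
      !![1, 0, exp (Real.sqrt 2 * ω * x), 0;
         0, -1, 0, 0;
         exp (Real.sqrt 2 * ω * x), 0, (1/2) * exp (2 * Real.sqrt 2 * ω * x), 0;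
         0, 0, 0, -1]
    let Ric : Matrix (Fin 4) (Fin 4) ℝ :=
      !![2 * ω ^ 2, 0, 2 * ω ^ 2 * exp (Real.sqrt 2 * ω * x), 0;
         0, 0, 0, 0;
         2 * ω ^ 2 * exp (Real.sqrt 2 * ω * x), 0, 2 * ω ^ 2 * exp (2 * Real.sqrt 2 * ω * x), 0;
         0, 0, 0, 0]
    let u : Fin 4 → ℝ :=
      ![Real.sqrt 2 * ω, 0, Real.sqrt 2 * ω * exp (Real.sqrt 2 * ω * x), 0]
    ∀ i j : Fin 4,
      Ric i j - (1/2) * (2 * ω ^ 2) * g i j + ω ^ 2 * g i j = u i * u j := by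
  intro g Ric u i j
  have h2 : Real.sqrt 2 * Real.sqrt 2 = 2 := Real.mul_self_sqrt (by norm_num)
  have he : exp (2 * Real.sqrt 2 * ω * x) = exp (Real.sqrt 2 * ω * x) * exp (Real.sqrt 2 * ω * x) := by
    rw [← Real.exp_add]; ring_nf
  fin_cases i <;> fin_cases j <;>
    simp [g, Ric, u, Matrix.cons_val_zero, Matrix.cons_val_one, Matrix.vecHead,
      Matrix.vecTail, he] <;>
    ring_nf <;> norm_num [Real.sq_sqrt] <;> ring
end

section
/- On the phase space of the relativistic diffusion in Gödel's universe, a² ≥ 1 and b² ≥ 2e^{2√2 ω x}; moreover a and b have the same sign and satisfy |e^{-√2 ω x}(b/a) - 2| ≤ √2, hence e^{-√2 ω x}(b/a) ≥ 2 - √2, and |e^{√2 ω x}(a/b) - 1| ≤ 1/√2. -/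
/-!
With `u = e^{-√2 ω x} b` and `c = 1 + ẋ² + ż² ≥ 1`, the relation reads `c = a² - ½(2a - u)²`,
equivalently `c = ½u² - (a - u)²` or `c = 2au - a² - ½u²`. The first two forms bound `a²` and
`u²` from below by `c` and `2c`, and, divided by `a²` resp. `u²`, bound `(u/a - 2)²` by `2` and
`(a/u - 1)²` by `½`; the third forces `au > 0`.
-/

open Real

section PseudoNorm

variable {a u c : ℝ}

theorem le_sq_of_pseudoNorm_eq (h : c + 1 / 2 * (2 * a - u) ^ 2 = a ^ 2) : c ≤ a ^ 2 := by
  nlinarith [sq_nonneg (2 * a - u)]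

theorem two_mul_le_sq_of_pseudoNorm_eq (h : c + 1 / 2 * (2 * a - u) ^ 2 = a ^ 2) :
    2 * c ≤ u ^ 2 := by
  nlinarith [sq_nonneg (a - u)]

theorem mul_pos_of_pseudoNorm_eq (h : c + 1 / 2 * (2 * a - u) ^ 2 = a ^ 2) (hc : 0 < c) :
    0 < a * u := by
  nlinarith [sq_nonneg a, sq_nonneg u]

theorem abs_div_sub_two_le_of_pseudoNorm_eq (h : c + 1 / 2 * (2 * a - u) ^ 2 = a ^ 2)
    (hc : 0 ≤ c) (ha : a ≠ 0) : |u / a - 2| ≤ √2 := by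
  apply Real.abs_le_sqrt
  rw [div_sub' ha, div_pow, div_le_iff₀ (by positivity)]
  nlinarith

theorem abs_div_sub_one_le_of_pseudoNorm_eq (h : c + 1 / 2 * (2 * a - u) ^ 2 = a ^ 2)
    (hc : 0 ≤ c) (hu : u ≠ 0) : |a / u - 1| ≤ 1 / √2 := by
  rw [one_div, ← Real.sqrt_inv]
  apply Real.abs_le_sqrt
  rw [div_sub_one hu, div_pow, div_le_iff₀ (by positivity)]
  nlinarith

end PseudoNorm

theorem godel_phase_space_bounds_general (ω x a b xdot zdot : ℝ)
    (h : 1 + xdot ^ 2 + zdot ^ 2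
        + (1/2) * (2 * a - exp (-(Real.sqrt 2 * ω * x)) * b) ^ 2 = a ^ 2) :
    a ^ 2 ≥ 1 ∧
    b ^ 2 ≥ 2 * exp (2 * Real.sqrt 2 * ω * x) ∧
    a ≠ 0 ∧ b ≠ 0 ∧ a * b > 0 ∧
    |exp (-(Real.sqrt 2 * ω * x)) * (b / a) - 2| ≤ Real.sqrt 2 ∧
    exp (-(Real.sqrt 2 * ω * x)) * (b / a) ≥ 2 - Real.sqrt 2 ∧
    |exp (Real.sqrt 2 * ω * x) * (a / b) - 1| ≤ 1 / Real.sqrt 2 := by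
  rw [exp_neg] at h ⊢
  rw [show 2 * √2 * ω * x = √2 * ω * x + √2 * ω * x by ring, exp_add]
  set F := exp (√2 * ω * x)
  have hF : 0 < F := exp_pos _
  have hc : 1 ≤ 1 + xdot ^ 2 + zdot ^ 2 := by linarith [sq_nonneg xdot, sq_nonneg zdot]
  have ha2 := le_sq_of_pseudoNorm_eq h
  have hu2 := two_mul_le_sq_of_pseudoNorm_eq h
  have hau := mul_pos_of_pseudoNorm_eq h (by linarith)
  have ha : a ≠ 0 := by rintro rfl; simp at hau
  have hb : b ≠ 0 := by rintro rfl; simp at hau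
  have hu : F⁻¹ * b ≠ 0 := mul_ne_zero (inv_ne_zero hF.ne') hb
  have hleft := abs_div_sub_two_le_of_pseudoNorm_eq h (by linarith) ha
  have hright := abs_div_sub_one_le_of_pseudoNorm_eq h (by linarith) hu
  rw [← mul_div_assoc]
  refine ⟨by linarith, ?_, ha, hb, ?_, hleft, by linarith [(abs_le.mp hleft).1], ?_⟩
  · have hb2 : 2 ≤ b ^ 2 / F ^ 2 := by
      rw [div_eq_inv_mul, ← inv_pow, ← mul_pow]; linarith
    rw [le_div_iff₀ (by positivity)] at hb2; linarith
  · have : a * b = F * (a * (F⁻¹ * b)) := by field_simp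
    rw [this]; positivity
  · convert hright using 3; field_simp

/-- On the phase space of the relativistic diffusion in Gödel's universe: `a² ≥ 1`,
`b² ≥ 2e^{2√2 ω x}`, `a` and `b` are nonzero with the same sign,
`|e^{−√2 ω x}(b/a) − 2| ≤ √2`, hence `e^{−√2 ω x}(b/a) ≥ 2 − √2`, and
`|e^{√2 ω x}(a/b) − 1| ≤ 1/√2`. -/
theorem godel_phase_space_bounds (ω x a b xdot zdot : ℝ) (hω : 0 < ω)
    (h : 1 + xdot ^ 2 + zdot ^ 2
        + (1/2) * (2 * a - exp (-(Real.sqrt 2 * ω * x)) * b) ^ 2 = a ^ 2) :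
    a ^ 2 ≥ 1 ∧
    b ^ 2 ≥ 2 * exp (2 * Real.sqrt 2 * ω * x) ∧
    a ≠ 0 ∧ b ≠ 0 ∧ a * b > 0 ∧
    |exp (-(Real.sqrt 2 * ω * x)) * (b / a) - 2| ≤ Real.sqrt 2 ∧
    exp (-(Real.sqrt 2 * ω * x)) * (b / a) ≥ 2 - Real.sqrt 2 ∧
    |exp (Real.sqrt 2 * ω * x) * (a / b) - 1| ≤ 1 / Real.sqrt 2 :=
  godel_phase_space_bounds_general ω x a b xdot zdot h
end
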